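/- arXiv:2204.13000 — 5 statements merged into one kernel-verified Lean document; each statement's English description precedes it below -/
import Mathlib

section
/- Let X be a compact metric space and f : X → X a continuous map. Then for every integer n ≥ 1, the chain recurrent set of the n-th iterate coincides with that of f: CR(f^n) = CR(f). -/
open Set Filter Topology Function
open scoped ENNReal

/-- A subset of a topological space is an *arc* if it is homeomorphic to `[0,1]`. -/
def IsArc {X : Type*} [TopologicalSpace X] (A : Set X) : Prop :=
  Nonempty (A ≃ₜ Set.Icc (0 : ℝ) 1)

/-- A point `p` is an *endpoint* of the arc `A` if `p ∈ A` and `A \ {p}` is connected. -/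
def IsArcEndpoint {X : Type*} [TopologicalSpace X] (A : Set X) (p : X) : Prop :=
  p ∈ A ∧ IsConnected (A \ {p})

/-- A subset is a *simple closed curve* if it is homeomorphic to the unit circle. -/
def IsSimpleClosedCurve {X : Type*} [TopologicalSpace X] (S : Set X) : Prop :=
  Nonempty (S ≃ₜ Metric.sphere (0 : ℂ) 1)

/-- A *tree* is a compact connected metric space which is a union of finitely many arcs,
any two of which are disjoint or intersect only in (one or both of) their endpoints,
and which contains no simple closed curve. -/
def IsTree (X : Type*) [MetricSpace X] : Prop :=
  CompactSpace X ∧ ConnectedSpace X ∧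
    (∃ 𝒜 : Finset (Set X), (∀ A ∈ 𝒜, IsArc A) ∧ ⋃₀ (𝒜 : Set (Set X)) = Set.univ ∧
      ∀ A ∈ 𝒜, ∀ B ∈ 𝒜, A ≠ B → ∀ p ∈ A ∩ B, IsArcEndpoint A p ∧ IsArcEndpoint B p) ∧
    ∀ S : Set X, ¬ IsSimpleClosedCurve S

/-- A *dendrite* is a locally connected continuum containing no simple closed curve. -/
def IsDendrite (X : Type*) [MetricSpace X] : Prop :=
  CompactSpace X ∧ ConnectedSpace X ∧ LocallyConnectedSpace X ∧
    ∀ S : Set X, ¬ IsSimpleClosedCurve S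

/-- `𝒰` is a finite open cover of the subset `Y`. -/
def IsOpenCoverOn {X : Type*} [TopologicalSpace X] (Y : Set X) (𝒰 : Finset (Set X)) : Prop :=
  (∀ U ∈ 𝒰, IsOpen U) ∧ Y ⊆ ⋃₀ (𝒰 : Set (Set X))

/-- `N(⋁_{i=1}^n f^{-a_i}(𝒰))`, relative to the subset `Y`: the minimal number `m` of elements
of the join cover `⋁_{i=1}^n f^{-a_i}(𝒰)` needed to cover `Y`. -/
noncomputable def seqCoverCountOn {X : Type*} (f : X → X) (Y : Set X) (a : ℕ → ℕ)
    (𝒰 : Finset (Set X)) (n : ℕ) : ℕ :=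
  sInf { m | ∃ c : Fin m → Fin n → Set X, (∀ j i, c j i ∈ 𝒰) ∧
    Y ⊆ ⋃ j, ⋂ i, f^[a i.1] ⁻¹' c j i }

/-- Topological sequence entropy of `f` restricted to the (invariant) subset `Y`,
with respect to the sequence `a`. -/
noncomputable def seqEntropyOn {X : Type*} [TopologicalSpace X] (f : X → X) (Y : Set X)
    (a : ℕ → ℕ) : ℝ≥0∞ :=
  ⨆ (𝒰 : Finset (Set X)) (_ : IsOpenCoverOn Y 𝒰),
    Filter.limsup
      (fun n : ℕ => ENNReal.ofReal (Real.log (seqCoverCountOn f Y a 𝒰 n) / n)) Filter.atTop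

/-- Topological sequence entropy of `f : X → X` with respect to the sequence `a`. -/
noncomputable def seqEntropy {X : Type*} [TopologicalSpace X] (f : X → X) (a : ℕ → ℕ) : ℝ≥0∞ :=
  seqEntropyOn f Set.univ a

/-- The ordinary topological entropy `h(f)`, i.e. the sequence entropy for `A = (0,1,2,…)`. -/
noncomputable def topEntropy {X : Type*} [TopologicalSpace X] (f : X → X) : ℝ≥0∞ :=
  seqEntropy f id

/-- `h_∞(f|_Y)`: the supremum over all strictly increasing sequences of positive integers of
the topological sequence entropies of `f` restricted to `Y`. -/
noncomputable def supSeqEntropyOn {X : Type*} [TopologicalSpace X] (f : X → X) (Y : Set X) :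
    ℝ≥0∞ :=
  ⨆ (a : ℕ → ℕ) (_ : StrictMono a) (_ : 1 ≤ a 0), seqEntropyOn f Y a

/-- `h_∞(f)`: the supremum of the topological sequence entropies of `f`. -/
noncomputable def supSeqEntropy {X : Type*} [TopologicalSpace X] (f : X → X) : ℝ≥0∞ :=
  supSeqEntropyOn f Set.univ

/-- The ω-limit set `ω_f(x) = ⋂_n closure {f^k(x) : k ≥ n}`. -/
def omegaLimitSet {X : Type*} [TopologicalSpace X] (f : X → X) (x : X) : Set X :=
  ⋂ n : ℕ, closure ((fun k => f^[k] x) '' Set.Ici n)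

/-- `ω(f) = ⋃_x ω_f(x)`. -/
def omegaSet {X : Type*} [TopologicalSpace X] (f : X → X) : Set X :=
  ⋃ x : X, omegaLimitSet f x

/-- The non-wandering set `Ω(f)`. -/
def nonWanderingSet {X : Type*} [TopologicalSpace X] (f : X → X) : Set X :=
  { x | ∀ U : Set X, IsOpen U → x ∈ U → ∃ n, 1 ≤ n ∧ (f^[n] ⁻¹' U ∩ U).Nonempty }

/-- There is an ε-chain from `x` to `y` under `f`. -/
def EpsChain {X : Type*} [MetricSpace X] (f : X → X) (ε : ℝ) (x y : X) : Prop :=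
  ∃ n, 1 ≤ n ∧ ∃ c : ℕ → X, c 0 = x ∧ c n = y ∧ ∀ i < n, dist (f (c i)) (c (i + 1)) < ε

/-- The chain recurrent set `CR(f)`. -/
def chainRecurrentSet {X : Type*} [MetricSpace X] (f : X → X) : Set X :=
  { x | ∀ ε > 0, EpsChain f ε x x }

/-- The chain recurrent set of the restriction `f|_Y`: chain recurrence witnessed by
ε-chains lying entirely inside `Y`. -/
def chainRecurrentSetOn {X : Type*} [MetricSpace X] (f : X → X) (Y : Set X) : Set X :=
  { x ∈ Y | ∀ ε > 0, ∃ n, 1 ≤ n ∧ ∃ c : ℕ → X, c 0 = x ∧ c n = x ∧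
      (∀ i ≤ n, c i ∈ Y) ∧ ∀ i < n, dist (f (c i)) (c (i + 1)) < ε }

/-- `I` is a periodic arc of `f` of period `s`: an arc with `f^s(I) ⊆ I` whose iterates
`I, f(I), …, f^{s-1}(I)` are pairwise disjoint. -/
def IsPeriodicArc {X : Type*} [TopologicalSpace X] (f : X → X) (I : Set X) (s : ℕ) : Prop :=
  IsArc I ∧ 1 ≤ s ∧ Set.MapsTo f^[s] I I ∧
    ∀ i j, i < j → j < s → Disjoint (f^[i] '' I) (f^[j] '' I)

/-- `Orb_f(I) = I ∪ f(I) ∪ … ∪ f^{s-1}(I)`. -/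
def arcOrbit {X : Type*} (f : X → X) (I : Set X) (s : ℕ) : Set X :=
  ⋃ i ∈ Finset.range s, f^[i] '' I

/-- `I` is an independence set for the pair `(U, V)` under `f`. -/
def IsIndepSetPair {X : Type*} (f : X → X) (U V : Set X) (I : Finset ℕ) : Prop :=
  ∀ J ⊆ I, J.Nonempty → ∀ s : ℕ → Bool,
    (⋂ j ∈ J, f^[j] ⁻¹' (if s j then U else V)).Nonempty

/-- `(x, y)` is an IN-pair of `(X, f)`. -/
def INPair {X : Type*} [TopologicalSpace X] (f : X → X) (x y : X) : Prop :=
  ∀ U ∈ nhds x, ∀ V ∈ nhds y, ∀ m : ℕ, ∃ I : Finset ℕ, m ≤ I.card ∧ IsIndepSetPair f U V I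

/-- The set `IN(X, f)` of IN-pairs of `(X, f)`. -/
def INPairs {X : Type*} [TopologicalSpace X] (f : X → X) : Set (X × X) :=
  { p | INPair f p.1 p.2 }

/-- `(x, y)` is an IN-pair of the restricted (sub)system `(Y, f|_Y)`, for `Y` invariant. -/
def INPairOn {X : Type*} [TopologicalSpace X] (f : X → X) (Y : Set X) (x y : X) : Prop :=
  x ∈ Y ∧ y ∈ Y ∧ ∀ U ∈ nhds x, ∀ V ∈ nhds y, ∀ m : ℕ, ∃ I : Finset ℕ, m ≤ I.card ∧
    ∀ J ⊆ I, J.Nonempty → ∀ s : ℕ → Bool,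
      (Y ∩ ⋂ j ∈ J, f^[j] ⁻¹' (if s j then U else V)).Nonempty

/-- `(x, y)` is a Li–Yorke pair for `f`. -/
def LiYorkePair {X : Type*} [MetricSpace X] (f : X → X) (x y : X) : Prop :=
  Filter.liminf (fun n : ℕ => dist (f^[n] x) (f^[n] y)) Filter.atTop = 0 ∧
    0 < Filter.limsup (fun n : ℕ => dist (f^[n] x) (f^[n] y)) Filter.atTop

/-! An ε-chain of `f^[n]` becomes an ε-chain of `f` by inserting the true orbit segments
`x, f x, …, f^[n-1] x` between consecutive points. Conversely, `f` is uniformly continuous on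
the compact space, so for small δ every δ-chain of `f` of length `n` ends ε-close to the
`f^[n]`-image of its start; going `n` times around a δ-chain loop at `x` and keeping every
`n`-th point therefore gives an ε-chain loop of `f^[n]` at `x`. -/

section ChainRecurrence

variable {X : Type*}

theorem UniformContinuous.dist_iterate_lt_of_chain [PseudoMetricSpace X] {f : X → X}
    (hf : UniformContinuous f) (n : ℕ) {ε : ℝ} (hε : 0 < ε) :
    ∃ δ > 0, ∀ c : ℕ → X, (∀ i < n, dist (f (c i)) (c (i + 1)) < δ) →
      dist (f^[n] (c 0)) (c n) < ε := by
  induction n generalizing ε with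
  | zero => exact ⟨ε, hε, fun c _ => by simpa using hε⟩
  | succ n ih =>
    obtain ⟨η, hη, hfη⟩ := Metric.uniformContinuous_iff.mp hf (ε / 2) (half_pos hε)
    obtain ⟨δ, hδ, hchain⟩ := ih hη
    refine ⟨min δ (ε / 2), lt_min hδ (half_pos hε), fun c hc => ?_⟩
    have hprefix : dist (f^[n] (c 0)) (c n) < η :=
      hchain c fun i hi => (hc i (by omega)).trans_le (min_le_left _ _)
    have hlast : dist (f (c n)) (c (n + 1)) < ε / 2 :=
      (hc n n.lt_succ_self).trans_le (min_le_right _ _)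
    calc dist (f^[n + 1] (c 0)) (c (n + 1))
        ≤ dist (f (f^[n] (c 0))) (f (c n)) + dist (f (c n)) (c (n + 1)) := by
          rw [iterate_succ_apply']
          exact dist_triangle _ _ _
      _ < ε / 2 + ε / 2 := add_lt_add (hfη hprefix) hlast
      _ = ε := add_halves ε

theorem apply_add_one_mod_eq_of_apply_zero_eq {c : ℕ → X} {m : ℕ} (hm : 0 < m)
    (hc : c 0 = c m) (k : ℕ) : c ((k + 1) % m) = c (k % m + 1) := by
  rw [← Nat.mod_add_mod]
  obtain hlt | heq : k % m + 1 < m ∨ k % m + 1 = m := Nat.lt_or_eq_of_le (Nat.mod_lt k hm)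
  · rw [Nat.mod_eq_of_lt hlt]
  · rw [heq, Nat.mod_self, hc]

theorem EpsChain.of_iterate [MetricSpace X] {f : X → X} {n : ℕ} {ε : ℝ} {x y : X}
    (hn : 0 < n) (hε : 0 < ε) (h : EpsChain f^[n] ε x y) : EpsChain f ε x y := by
  obtain ⟨m, hm, c, rfl, rfl, hc⟩ := h
  set d : ℕ → X := fun k => f^[k % n] (c (k / n)) with hd_def
  have hd : ∀ j, ∀ i < n, d (n * j + i) = f^[i] (c j) := fun j i hi => by
    simp only [hd_def, Nat.mul_add_mod, Nat.mul_add_div hn, Nat.mod_eq_of_lt hi,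
      Nat.div_eq_of_lt hi, add_zero]
  refine ⟨m * n, Nat.one_le_iff_ne_zero.mpr (by positivity), d, by simp [hd_def],
    by simp [hd_def, Nat.mul_mod_left, Nat.mul_div_cancel _ hn], fun k hk => ?_⟩
  obtain ⟨j, i, hi, rfl⟩ : ∃ j i, i < n ∧ k = n * j + i :=
    ⟨k / n, k % n, Nat.mod_lt k hn, (Nat.div_add_mod k n).symm⟩
  obtain hi' | hi' : i + 1 < n ∨ i + 1 = n := Nat.lt_or_eq_of_le hi
  · rw [hd j i hi, add_assoc, hd j (i + 1) hi', iterate_succ_apply', dist_self]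
    exact hε
  · have hj : j < m := by nlinarith
    rw [hd j i hi, show n * j + i + 1 = n * (j + 1) + 0 by rw [mul_add]; omega, hd (j + 1) 0 hn,
      iterate_zero_apply, ← iterate_succ_apply' f, Nat.succ_eq_add_one, hi']
    exact hc j hj

theorem UniformContinuous.exists_epsChain_iterate [MetricSpace X] {f : X → X}
    (hf : UniformContinuous f) (n : ℕ) {ε : ℝ} (hε : 0 < ε) :
    ∃ δ > 0, ∀ x, EpsChain f δ x x → EpsChain f^[n] ε x x := by
  obtain ⟨δ, hδ, hblock⟩ := hf.dist_iterate_lt_of_chain n hε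
  refine ⟨δ, hδ, fun x ⟨m, hm, c, hc0, hcm, hc⟩ => ?_⟩
  have hstep : ∀ k, dist (f (c (k % m))) (c ((k + 1) % m)) < δ := fun k => by
    rw [apply_add_one_mod_eq_of_apply_zero_eq hm (hc0.trans hcm.symm)]
    exact hc _ (Nat.mod_lt k hm)
  refine ⟨m, hm, fun j => c (j * n % m), by simpa using hc0,
    by simpa [Nat.mul_mod_right] using hc0, fun j _ => ?_⟩
  have hblock_j := hblock (fun i => c ((j * n + i) % m)) fun i _ => by
    simpa only [add_assoc] using hstep (j * n + i)
  simpa [add_mul] using hblock_j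

theorem chainRecurrentSet_iterate_subset [MetricSpace X] (f : X → X) {n : ℕ} (hn : 0 < n) :
    chainRecurrentSet f^[n] ⊆ chainRecurrentSet f :=
  fun _ hx _ hε => (hx _ hε).of_iterate hn hε

theorem UniformContinuous.chainRecurrentSet_subset_iterate [MetricSpace X] {f : X → X}
    (hf : UniformContinuous f) (n : ℕ) : chainRecurrentSet f ⊆ chainRecurrentSet f^[n] :=
  fun x hx _ hε =>
    let ⟨δ, hδ, hchain⟩ := hf.exists_epsChain_iterate n hε
    hchain x (hx δ hδ)

end ChainRecurrence

/-- For every `n ≥ 1`, `CR(f^n) = CR(f)`. -/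
theorem chainRecurrentSet_iterate {X : Type*} [MetricSpace X] [CompactSpace X]
    (f : X → X) (hf : Continuous f) :
    ∀ n : ℕ, 1 ≤ n → chainRecurrentSet f^[n] = chainRecurrentSet f :=
  fun n hn => (chainRecurrentSet_iterate_subset f hn).antisymm
    ((CompactSpace.uniformContinuous_of_continuous hf).chainRecurrentSet_subset_iterate n)
end

section
/- Let X be a compact metric space and f : X → X a continuous map, and let g = f|_{CR(f)} be the restriction of f to its chain recurrent set (which is a closed invariant set, with the induced metric). Then the chain recurrent set of g equals that of f: CR(g) = CR(f). -/
open Set Filter Topology Function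
open scoped ENNReal

/-! The points on a fine chain loop through `x` are themselves almost chain recurrent, and by
compactness the almost chain recurrent points at a small enough scale lie uniformly close to
`CR(f)`. Projecting each point of a fine loop through `x` to a nearby point of `CR(f)` and
using the uniform continuity of `f` turns the loop into an `ε`-chain inside `CR(f)`. -/

theorem UniformContinuous.exists_pos_dist_apply_lt {X : Type*} [PseudoMetricSpace X]
    {f : X → X} (hf : UniformContinuous f) {ε : ℝ} (hε : 0 < ε) :
    ∃ η > 0, ∀ a a' b b' : X, dist a a' < η → dist (f a) b < η → dist b b' < η →
      dist (f a') b' < ε := by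
  obtain ⟨η₀, hη₀, hfη₀⟩ := Metric.uniformContinuous_iff.mp hf (ε / 3) (by positivity)
  refine ⟨min η₀ (ε / 3), lt_min hη₀ (by positivity), fun a a' b b' ha hab hb => ?_⟩
  have hfa : dist (f a') (f a) < ε / 3 := hfη₀ (dist_comm a a' ▸ ha.trans_le (min_le_left _ _))
  calc dist (f a') b' ≤ dist (f a') (f a) + dist (f a) b + dist b b' := dist_triangle4 _ _ _ _
    _ < ε / 3 + ε / 3 + ε / 3 := by
        gcongr
        exacts [hab.trans_le (min_le_right _ _), hb.trans_le (min_le_right _ _)]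
    _ = ε := by ring

namespace EpsChain

variable {X : Type*} [MetricSpace X] {f : X → X} {δ δ' : ℝ} {x y z w : X}

theorem mono (h : EpsChain f δ x y) (hδ : δ ≤ δ') : EpsChain f δ' x y := by
  obtain ⟨n, hn, c, hc0, hcn, hc⟩ := h
  exact ⟨n, hn, c, hc0, hcn, fun i hi => (hc i hi).trans_le hδ⟩

theorem trans (hxy : EpsChain f δ x y) (hyz : EpsChain f δ y z) : EpsChain f δ x z := by
  obtain ⟨m, hm, c, hc0, hcm, hc⟩ := hxy
  obtain ⟨k, hk, d, hd0, hdk, hd⟩ := hyz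
  refine ⟨m + k, by omega, fun i => if i ≤ m then c i else d (i - m), by simp [hc0], ?_, ?_⟩
  · simpa [show ¬m + k ≤ m by omega] using hdk
  · intro i hi
    rcases lt_trichotomy i m with him | rfl | him
    · simpa [him.le, Nat.succ_le_of_lt him] using hc i him
    · simpa [hcm, ← hd0] using hd 0 (by omega)
    · simpa [show ¬i ≤ m by omega, show ¬i + 1 ≤ m by omega, show i + 1 - m = i - m + 1 by omega]
        using hd (i - m) (by omega)

theorem of_segment {n i j : ℕ} {c : ℕ → X} (hc : ∀ k < n, dist (f (c k)) (c (k + 1)) < δ)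
    (hij : i < j) (hjn : j ≤ n) : EpsChain f δ (c i) (c j) :=
  ⟨j - i, by omega, fun k => c (i + k), by simp, by simp [show i + (j - i) = j by omega],
    fun k hk => hc (i + k) (by omega)⟩

theorem perturb_start (h : EpsChain f δ z w) (hy : dist (f y) (f z) < δ') :
    EpsChain f (δ + δ') y w := by
  obtain ⟨n, hn, c, hc0, hcn, hc⟩ := h
  refine ⟨n, hn, Function.update c 0 y, by simp, by simp [show n ≠ 0 by omega, hcn], ?_⟩
  intro i hi
  rcases Nat.eq_zero_or_pos i with rfl | hi0
  · calc dist (f y) (c 1) ≤ dist (f y) (f z) + dist (f z) (c 1) := dist_triangle _ _ _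
      _ < δ' + δ := add_lt_add hy (hc0 ▸ hc 0 hi)
      _ = δ + δ' := add_comm _ _
  · simpa [hi0.ne'] using (hc i hi).trans_le (le_add_of_nonneg_right (dist_nonneg.trans hy.le))

theorem perturb_end (h : EpsChain f δ z w) (hw : dist w y < δ') : EpsChain f (δ + δ') z y := by
  obtain ⟨n, hn, c, hc0, hcn, hc⟩ := h
  refine ⟨n, hn, Function.update c n y, by simp [show 0 ≠ n by omega, hc0], by simp, ?_⟩
  intro i hi
  rw [Function.update_of_ne hi.ne]
  by_cases hin : i + 1 = n
  · calc dist (f (c i)) (Function.update c n y (i + 1))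
          ≤ dist (f (c i)) (c (i + 1)) + dist (c (i + 1)) y := by
            simpa [hin] using dist_triangle _ _ _
      _ < δ + δ' := add_lt_add (hc i hi) (by rwa [hin, hcn])
  · simpa [hin] using (hc i hi).trans_le (le_add_of_nonneg_right (dist_nonneg.trans hw.le))

end EpsChain

section

variable {X : Type*} [MetricSpace X] {f : X → X}

def epsChainRecurrentSet (f : X → X) (ε : ℝ) : Set X :=
  {x | EpsChain f ε x x}

theorem epsChainRecurrentSet_mono {δ δ' : ℝ} (h : δ ≤ δ') :
    epsChainRecurrentSet f δ ⊆ epsChainRecurrentSet f δ' :=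
  fun _ hx => EpsChain.mono hx h

theorem mem_epsChainRecurrentSet_of_loop {δ : ℝ} {n i : ℕ} {c : ℕ → X} (hn : 1 ≤ n)
    (hcn : c n = c 0) (hc : ∀ k < n, dist (f (c k)) (c (k + 1)) < δ) (hi : i ≤ n) :
    c i ∈ epsChainRecurrentSet f δ := by
  rcases Nat.eq_zero_or_pos i with rfl | hi0
  · simpa [epsChainRecurrentSet, hcn] using EpsChain.of_segment hc (by omega : 0 < n) le_rfl
  rcases hi.lt_or_eq with hin | rfl
  · exact (EpsChain.of_segment hc hin le_rfl).trans (hcn ▸ EpsChain.of_segment hc hi0 hi)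
  · simpa [epsChainRecurrentSet, hcn] using EpsChain.of_segment hc (by omega : 0 < i) le_rfl

theorem closure_epsChainRecurrentSet_subset (hf : Continuous f) {δ δ' : ℝ} (h : δ < δ') :
    closure (epsChainRecurrentSet f δ) ⊆ epsChainRecurrentSet f δ' := by
  intro y hy
  set r := (δ' - δ) / 2
  have hr : 0 < r := by simp only [r]; linarith
  have hnear : ∀ᶠ z in 𝓝 y, dist (f y) (f z) < r ∧ dist z y < r :=
    ((hf.tendsto y).eventually (Metric.ball_mem_nhds (f y) hr)).and (Metric.ball_mem_nhds y hr)
      |>.mono fun z hz => ⟨dist_comm (f z) (f y) ▸ hz.1, hz.2⟩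
  obtain ⟨z, ⟨hfz, hz⟩, hzR⟩ := (hnear.and_frequently (mem_closure_iff_frequently.mp hy)).exists
  exact ((hzR.perturb_start hfz).perturb_end hz).mono (by simp only [r]; linarith)

theorem chainRecurrentSet_eq_iInter :
    chainRecurrentSet f = ⋂ δ : Set.Ioi (0 : ℝ), epsChainRecurrentSet f δ := by
  ext x
  simp [chainRecurrentSet, epsChainRecurrentSet]

theorem exists_epsChainRecurrentSet_subset_thickening [CompactSpace X] (hf : Continuous f)
    {η : ℝ} (hη : 0 < η) :
    ∃ δ > 0, epsChainRecurrentSet f δ ⊆ Metric.thickening η (chainRecurrentSet f) := by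
  let V : Set.Ioi (0 : ℝ) → Set X := fun δ => closure (epsChainRecurrentSet f δ)
  have hV : Directed (· ⊇ ·) V := fun a b =>
    ⟨⟨min a b, Set.mem_Ioi.mpr (lt_min a.2 b.2)⟩,
      closure_mono (epsChainRecurrentSet_mono (min_le_left _ _)),
      closure_mono (epsChainRecurrentSet_mono (min_le_right _ _))⟩
  have hVCR : ⋂ δ, V δ ⊆ chainRecurrentSet f := by
    rw [chainRecurrentSet_eq_iInter]
    refine fun x hx => Set.mem_iInter.mpr fun δ => ?_
    have hδ : (0 : ℝ) < δ := δ.2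
    exact closure_epsChainRecurrentSet_subset hf (half_lt_self hδ)
      (Set.mem_iInter.mp hx ⟨δ / 2, Set.mem_Ioi.mpr (half_pos hδ)⟩)
  obtain ⟨δ, hδ⟩ := exists_subset_nhds_of_isCompact hV (fun δ => isClosed_closure.isCompact)
    fun x hx => Metric.isOpen_thickening.mem_nhds (Metric.self_subset_thickening hη _ (hVCR hx))
  exact ⟨δ, δ.2, subset_closure.trans hδ⟩

theorem exists_epsChain_in_chainRecurrentSet [CompactSpace X] (hf : Continuous f) {x : X}
    (hx : x ∈ chainRecurrentSet f) {ε : ℝ} (hε : 0 < ε) :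
    ∃ n, 1 ≤ n ∧ ∃ c : ℕ → X, c 0 = x ∧ c n = x ∧ (∀ i ≤ n, c i ∈ chainRecurrentSet f) ∧
      ∀ i < n, dist (f (c i)) (c (i + 1)) < ε := by
  set CR := chainRecurrentSet f
  obtain ⟨η, hη, hshadow⟩ :=
    (CompactSpace.uniformContinuous_of_continuous hf).exists_pos_dist_apply_lt hε
  obtain ⟨δ, hδ, hδη⟩ := exists_epsChainRecurrentSet_subset_thickening hf hη
  obtain ⟨n, hn, c, hc0, hcn, hc⟩ := hx (min δ η) (lt_min hδ hη)
  have hproj : ∀ y ∈ Metric.thickening η CR, ∃ q ∈ CR, dist y q < η ∧ (y ∈ CR → q = y) := by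
    intro y hy
    by_cases hyCR : y ∈ CR
    · exact ⟨y, hyCR, by simpa using hη, fun _ => rfl⟩
    · obtain ⟨q, hq, hyq⟩ := Metric.mem_thickening_iff.mp hy
      exact ⟨q, hq, hyq, fun h => absurd h hyCR⟩
  choose! r hrCR hrdist hrfix using hproj
  have hnear : ∀ i ≤ n, c i ∈ Metric.thickening η CR := fun i hi =>
    hδη (epsChainRecurrentSet_mono (min_le_left _ _)
      (mem_epsChainRecurrentSet_of_loop hn (hcn.trans hc0.symm) hc hi))
  have hx' : x ∈ Metric.thickening η CR := Metric.self_subset_thickening hη _ hx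
  -- `r` fixes the points of `CR`, so the projected loop still starts and ends at `x`.
  refine ⟨n, hn, r ∘ c, by simp [hc0, hrfix x hx' hx], by simp [hcn, hrfix x hx' hx],
    fun i hi => hrCR _ (hnear i hi), fun i hi => ?_⟩
  exact hshadow _ _ _ _ (hrdist _ (hnear i hi.le)) ((hc i hi).trans_le (min_le_right _ _))
    (hrdist _ (hnear (i + 1) hi))

end

/-- If `g = f|_{CR(f)}`, then `CR(g) = CR(f)`. -/
theorem chainRecurrentSet_restriction {X : Type*} [MetricSpace X] [CompactSpace X]
    (f : X → X) (hf : Continuous f) :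
    chainRecurrentSetOn f (chainRecurrentSet f) = chainRecurrentSet f := by
  ext x
  refine ⟨fun hx ε hε => ?_,
    fun hx => ⟨hx, fun ε hε => exists_epsChain_in_chainRecurrentSet hf hx hε⟩⟩
  obtain ⟨n, hn, c, hc0, hcn, -, hc⟩ := hx.2 ε hε
  exact ⟨n, hn, c, hc0, hcn, hc⟩
end

section
/- Let (X,f) be a dynamical system on a compact metric space. Then for every integer k ≥ 1 the set of IN-pairs of f coincides with the set of IN-pairs of f^k, IN(X,f) = IN(X,f^k), and moreover IN(X,f) is a closed subset of X × X. -/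
open Set Filter Topology Function
open scoped ENNReal

/-! Passing from `f` to `f^k` multiplies the times of an independence set by `k`; conversely,
by pigeonhole a large independence set for `f` has many elements in one residue class
`r mod k`, and pulling a witness forward by `f^r` turns those into an independence set for
`f^k`. Closedness holds because failure of the IN-property is witnessed by a pair of
neighbourhoods, and their interiors witness it at all nearby pairs. -/

section

variable {X : Type*} {f : X → X} {U V : Set X} {I : Finset ℕ}

theorem isIndepSetPair_iff : IsIndepSetPair f U V I ↔ ∀ J ⊆ I, J.Nonempty →
    ∀ s : ℕ → Bool, ∃ x, ∀ j ∈ J, f^[j] x ∈ if s j then U else V := by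
  simp only [IsIndepSetPair, Set.Nonempty, Set.mem_iInter₂, Set.mem_preimage]

namespace IsIndepSetPair

theorem mono {U' V' : Set X} (h : IsIndepSetPair f U' V' I) (hU : U' ⊆ U) (hV : V' ⊆ V) :
    IsIndepSetPair f U V I := by
  rw [isIndepSetPair_iff] at h ⊢
  intro J hJ hJne s
  obtain ⟨x, hx⟩ := h J hJ hJne s
  refine ⟨x, fun j hj => ?_⟩
  have hxj := hx j hj
  split_ifs at hxj ⊢
  · exact hU hxj
  · exact hV hxj

theorem subset {I' : Finset ℕ} (h : IsIndepSetPair f U V I) (hI' : I' ⊆ I) :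
    IsIndepSetPair f U V I' :=
  fun J hJ => h J (hJ.trans hI')

theorem image_iff {g : ℕ → ℕ} (hg : Injective g) :
    IsIndepSetPair f U V (I.image g) ↔ ∀ J ⊆ I, J.Nonempty → ∀ s : ℕ → Bool,
      ∃ x, ∀ j ∈ J, f^[g j] x ∈ if s j then U else V := by
  rw [isIndepSetPair_iff]
  constructor
  · intro h J hJ hJne s
    obtain ⟨x, hx⟩ := h (J.image g) (Finset.image_subset_image hJ) (hJne.image g)
      (s ∘ invFun g)
    refine ⟨x, fun j hj => ?_⟩
    simpa [leftInverse_invFun hg j] using hx (g j) (Finset.mem_image_of_mem g hj)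
  · intro h J' hJ' hJ'ne s
    obtain ⟨x, hx⟩ := h (I.filter (g · ∈ J')) (Finset.filter_subset _ _)
      (by
        obtain ⟨j', hj'⟩ := hJ'ne
        obtain ⟨i, hi, rfl⟩ := Finset.mem_image.1 (hJ' hj')
        exact ⟨i, Finset.mem_filter.2 ⟨hi, hj'⟩⟩)
      (s ∘ g)
    refine ⟨x, fun j' hj' => ?_⟩
    obtain ⟨i, hi, rfl⟩ := Finset.mem_image.1 (hJ' hj')
    exact hx i (Finset.mem_filter.2 ⟨hi, hj'⟩)

theorem iterate_iff_image_mul {k : ℕ} (hk : 0 < k) :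
    IsIndepSetPair f^[k] U V I ↔ IsIndepSetPair f U V (I.image (k * ·)) := by
  simp only [image_iff (mul_right_injective₀ hk.ne'), isIndepSetPair_iff, iterate_mul]

theorem of_image_add {r : ℕ} (h : IsIndepSetPair f U V (I.image (· + r))) :
    IsIndepSetPair f U V I := by
  rw [isIndepSetPair_iff]
  intro J hJ hJne s
  obtain ⟨x, hx⟩ := (image_iff (add_left_injective r)).1 h J hJ hJne s
  exact ⟨f^[r] x, fun j hj => by simpa only [← iterate_add_apply] using hx j hj⟩

end IsIndepSetPair

end

theorem Finset.exists_image_mul_add_subset {I : Finset ℕ} {k m : ℕ} (hk : 0 < k)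
    (hI : k * m ≤ I.card) :
    ∃ r, ∃ Q : Finset ℕ, m ≤ Q.card ∧ Q.image (fun q => k * q + r) ⊆ I := by
  obtain ⟨r, -, hr⟩ := Finset.exists_le_card_fiber_of_mul_le_card_of_maps_to
    (s := I) (f := (· % k)) (n := m) (fun j _ => Finset.mem_range.2 (Nat.mod_lt j hk))
    ⟨0, Finset.mem_range.2 hk⟩ (by rwa [Finset.card_range])
  set F := I.filter (· % k = r)
  have hF : (F.image (· / k)).image (fun q => k * q + r) = F := by
    rw [Finset.image_image, Finset.image_congr (g := id), Finset.image_id]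
    intro j hj
    simp only [comp_apply, id, ← (Finset.mem_filter.1 hj).2, Nat.div_add_mod]
  refine ⟨r, F.image (· / k), ?_, by rw [hF]; exact Finset.filter_subset _ _⟩
  calc m ≤ F.card := hr
    _ = ((F.image (· / k)).image (fun q => k * q + r)).card := by rw [hF]
    _ ≤ (F.image (· / k)).card := Finset.card_image_le

namespace INPair

variable {X : Type*} [TopologicalSpace X] {f : X → X} {x y : X} {k : ℕ}

theorem iterate (h : INPair f x y) (hk : 0 < k) : INPair f^[k] x y := by
  intro U hU V hV m
  obtain ⟨I, hIcard, hI⟩ := h U hU V hV (k * m)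
  obtain ⟨r, Q, hQcard, hQI⟩ := Finset.exists_image_mul_add_subset hk hIcard
  have hQ : IsIndepSetPair f U V ((Q.image (k * ·)).image (· + r)) := by
    rw [Finset.image_image]
    exact hI.subset hQI
  exact ⟨Q, hQcard, (IsIndepSetPair.iterate_iff_image_mul hk).2 hQ.of_image_add⟩

theorem of_iterate (h : INPair f^[k] x y) (hk : 0 < k) : INPair f x y := by
  intro U hU V hV m
  obtain ⟨I, hIcard, hI⟩ := h U hU V hV m
  refine ⟨I.image (k * ·), ?_, (IsIndepSetPair.iterate_iff_image_mul hk).1 hI⟩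
  rwa [Finset.card_image_of_injective I (mul_right_injective₀ hk.ne')]

end INPair

theorem isClosed_INPairs {X : Type*} [TopologicalSpace X] (f : X → X) :
    IsClosed (INPairs f) := by
  refine isOpen_compl_iff.1 (isOpen_iff_mem_nhds.2 fun ⟨x, y⟩ hxy => ?_)
  simp only [Set.mem_compl_iff, INPairs, Set.mem_ofPred_eq, INPair] at hxy
  push Not at hxy
  obtain ⟨U, hU, V, hV, m, hm⟩ := hxy
  filter_upwards [prod_mem_nhds (interior_mem_nhds.2 hU) (interior_mem_nhds.2 hV)]
  rintro ⟨x', y'⟩ ⟨hx', hy'⟩ hIN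
  obtain ⟨I, hIcard, hI⟩ := hIN (interior U) (isOpen_interior.mem_nhds hx')
    (interior V) (isOpen_interior.mem_nhds hy') m
  exact hm I hIcard (hI.mono interior_subset interior_subset)

theorem INPairs_iterate_and_closed_general {X : Type*} [MetricSpace X]
    (f : X → X) :
    (∀ k : ℕ, 1 ≤ k → INPairs f = INPairs f^[k]) ∧ IsClosed (INPairs f) :=
  ⟨fun _ hk => Set.ext fun _ => ⟨fun h => h.iterate hk, fun h => h.of_iterate hk⟩,
    isClosed_INPairs f⟩

/-- `IN(X,f) = IN(X,f^k)` for every `k ≥ 1`, and `IN(X,f)` is closed. -/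
theorem INPairs_iterate_and_closed {X : Type*} [MetricSpace X] [CompactSpace X]
    (f : X → X) (hf : Continuous f) :
    (∀ k : ℕ, 1 ≤ k → INPairs f = INPairs f^[k]) ∧ IsClosed (INPairs f) :=
  INPairs_iterate_and_closed_general f
end

section
/- Let (X,f) and (Y,g) be dynamical systems on compact metric spaces with (Y,g) a factor of (X,f) through a factor map π : X → Y. If (x,y) is an IN-pair of (X,f), then (π(x), π(y)) is an IN-pair of (Y,g). -/
open Set Filter Topology Function
open scoped ENNReal

theorem IsIndepSetPair.of_semiconj {X Y : Type*} {f : X → X} {g : Y → Y} {π : X → Y}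
    (hπ : Semiconj π f g) {U V : Set Y} {I : Finset ℕ}
    (hI : IsIndepSetPair f (π ⁻¹' U) (π ⁻¹' V) I) : IsIndepSetPair g U V I := by
  intro J hJ hJne s
  obtain ⟨z, hz⟩ := hI J hJ hJne s
  refine ⟨π z, mem_iInter₂.2 fun j hj => ?_⟩
  have hzj := mem_iInter₂.1 hz j hj
  rw [mem_preimage, ← (hπ.iterate_right j).eq]
  split_ifs at hzj ⊢ <;> exact hzj

theorem INPair.of_semiconj {X Y : Type*} [TopologicalSpace X] [TopologicalSpace Y]
    {f : X → X} {g : Y → Y} {π : X → Y} (hπc : Continuous π) (hπ : Semiconj π f g)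
    {x y : X} (hxy : INPair f x y) : INPair g (π x) (π y) := by
  intro U hU V hV m
  obtain ⟨I, hcard, hI⟩ :=
    hxy _ (hπc.continuousAt.preimage_mem_nhds hU) _ (hπc.continuousAt.preimage_mem_nhds hV) m
  exact ⟨I, hcard, hI.of_semiconj hπ⟩

theorem factor_map_INPair_general {X Y : Type*} [MetricSpace X] [MetricSpace Y]
    (f : X → X) (g : Y → Y) (π : X → Y) (hπ : Continuous π) (hcomm : π ∘ f = g ∘ π)
    {x y : X} (hxy : INPair f x y) :
    INPair g (π x) (π y) :=
  hxy.of_semiconj hπ (semiconj_iff_comp_eq.2 hcomm)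

/-- A factor map sends IN-pairs to IN-pairs. -/
theorem factor_map_INPair {X Y : Type*} [MetricSpace X] [CompactSpace X]
    [MetricSpace Y] [CompactSpace Y] (f : X → X) (g : Y → Y) (π : X → Y)
    (hf : Continuous f) (hg : Continuous g) (hπ : Continuous π)
    (hsurj : Function.Surjective π) (hcomm : π ∘ f = g ∘ π)
    {x y : X} (hxy : INPair f x y) :
    INPair g (π x) (π y) :=
  factor_map_INPair_general f g π hπ hcomm hxy
end

section
/- There exist a compact metric space Y (realizable as a compact subset of ℝ²) and a homeomorphism g : Y → Y such that every point of Y is periodic under g (hence (Y,g) is a distal system) and yet h_∞(g) > 0. -/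
open Set Filter Topology Function
open scoped ENNReal

/-! The space is a union of concentric circles, the circle of radius `r` being rotated by the
angle `2πr`. The radii are `1 + x / 8 ^ n`, where `x` is an `n`-digit octal fraction with
digits `0` and `4`; they accumulate only at `1`, so the union is compact, and each of them has
denominator dividing `8 ^ (2 * n)`, so every point is periodic. A homeomorphism all of whose
points are periodic is distal, because the distance between two orbits is then a periodic
sequence. On the other hand, at time `8 ^ (n + i)` the point `(1 + x / 8 ^ n, 0)` has turned by
the angle `2π · 0.dᵢdᵢ₊₁…` (mod `2π`) and so lies in the right or the left half plane according
as the digit `dᵢ` is `0` or `4`. Hence along the sequence `8 ^ k` the two half planes have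
independence sets of density `1/2`, and the sequence entropy is at least `log 2 / 2`. -/

open Real

theorem Function.eq_of_liminf_dist_iterate_eq_zero {X : Type*} [MetricSpace X] {f : X → X}
    (hf : Injective f) {x y : X} (hx : x ∈ periodicPts f) (hy : y ∈ periodicPts f)
    (h : liminf (fun n => dist (f^[n] x) (f^[n] y)) atTop = 0) : x = y := by
  obtain ⟨p, hp, hpx⟩ := hx
  obtain ⟨q, hq, hqy⟩ := hy
  set u := fun n => dist (f^[n] x) (f^[n] y)
  have hN : 0 < p * q := Nat.mul_pos hp hq
  have hu : ∀ n, u (n % (p * q)) = u n := fun n => by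
    simp only [u, (hpx.mul_const q).iterate_mod_apply, (hqy.const_mul p).iterate_mod_apply]
  obtain ⟨n₀, -, hmin⟩ := (Finset.range (p * q)).exists_min_image u ⟨0, by simpa using hN⟩
  obtain ⟨n₁, -, hmax⟩ := (Finset.range (p * q)).exists_max_image u ⟨0, by simpa using hN⟩
  have hle : ∀ n, u n₀ ≤ u n := fun n => hu n ▸ hmin _ (by simpa using Nat.mod_lt n hN)
  have hge : ∀ n, u n ≤ u n₁ := fun n => hu n ▸ hmax _ (by simpa using Nat.mod_lt n hN)
  have h₀ : u n₀ ≤ 0 :=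
    h ▸ le_liminf_of_le (isCoboundedUnder_ge_of_le _ hge) (.of_forall hle)
  exact hf.iterate n₀ (dist_le_zero.1 h₀)

theorem two_pow_le_seqCoverCountOn_univ {X : Type*} {f : X → X} {a : ℕ → ℕ}
    {𝒰 : Finset (Set X)} (h𝒰 : ⋃₀ (𝒰 : Set (Set X)) = univ) {K₀ K₁ : Set X}
    (hsep : ∀ U ∈ 𝒰, Disjoint U K₀ ∨ Disjoint U K₁) {n M : ℕ} (t : Fin n → Fin M)
    (hind : ∀ s : Fin n → Bool, ∃ x, ∀ i, f^[a (t i)] x ∈ cond (s i) K₁ K₀) :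
    2 ^ n ≤ seqCoverCountOn f univ a 𝒰 M := by
  refine le_csInf ?_ ?_
  · have hmem : ∀ x (i : Fin M), ∃ U : 𝒰, f^[a i] x ∈ (U : Set X) := fun x i => by
      obtain ⟨U, hU, hxU⟩ := sUnion_eq_univ_iff.1 h𝒰 (f^[a i] x)
      exact ⟨⟨U, hU⟩, hxU⟩
    choose U hU using hmem
    let e := Fintype.equivFin (Fin M → 𝒰)
    refine ⟨_, fun j i => e.symm j i, fun j i => (e.symm j i).2, fun x _ => ?_⟩
    exact mem_iUnion.2 ⟨e (U x), mem_iInter.2 fun i => by simpa using hU x i⟩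
  · rintro m ⟨c, hc, hcover⟩
    choose x hx using hind
    choose J hJ using fun s => mem_iUnion.1 (hcover (mem_univ (x s)))
    -- `c (J s) (t i) ∈ 𝒰` meets both `cond (s i) K₁ K₀` and `cond (s' i) K₁ K₀`, so `s i = s' i`
    have hJ_inj : Injective J := fun s s' hss' => funext fun i => by
      have h := mem_iInter.1 (hJ s) (t i)
      have h' := mem_iInter.1 (hJ s') (t i)
      rw [← hss'] at h'
      have hsi := hx s i
      have hsi' := hx s' i
      generalize s i = b at hsi ⊢
      generalize s' i = b' at hsi' ⊢
      rcases hsep _ (hc (J s) (t i)) with hd | hd <;>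
        cases b <;> cases b' <;> simp_all [disjoint_left]
    simpa using Fintype.card_le_of_injective J hJ_inj

theorem ofReal_log_two_div_two_le_seqEntropy {X : Type*} [TopologicalSpace X] {f : X → X}
    {a : ℕ → ℕ} {K₀ K₁ : Set X} (h₀ : IsClosed K₀) (h₁ : IsClosed K₁) (hK : Disjoint K₀ K₁)
    (hind : ∀ n (s : Fin n → Bool), ∃ x, ∀ i : Fin n, f^[a (n + i)] x ∈ cond (s i) K₁ K₀) :
    ENNReal.ofReal (Real.log 2 / 2) ≤ seqEntropy f a := by
  classical
  set 𝒰 : Finset (Set X) := {K₀ᶜ, K₁ᶜ}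
  have h𝒰 : ⋃₀ (𝒰 : Set (Set X)) = univ := by
    simp [𝒰, ← compl_inter, hK.inter_eq]
  have hcount : ∀ n, 2 ^ n ≤ seqCoverCountOn f univ a 𝒰 (2 * n) := fun n =>
    two_pow_le_seqCoverCountOn_univ h𝒰
      (by simp [𝒰, disjoint_compl_left]) (fun i => ⟨n + i, by omega⟩) (hind n)
  have hopen : IsOpenCoverOn univ 𝒰 :=
    ⟨by simp [𝒰, h₀.isOpen_compl, h₁.isOpen_compl], h𝒰.ge⟩
  refine le_iSup₂_of_le 𝒰 hopen (le_limsup_of_frequently_le' ?_)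
  refine frequently_atTop.2 fun N => ⟨2 * (N + 1), by omega, ENNReal.ofReal_le_ofReal ?_⟩
  calc Real.log 2 / 2 = Real.log (2 ^ (N + 1)) / ↑(2 * (N + 1)) := by
        rw [Real.log_pow]; push_cast; field_simp
    _ ≤ _ := by gcongr; exact_mod_cast hcount (N + 1)

theorem seqEntropy_le_supSeqEntropy {X : Type*} [TopologicalSpace X] (f : X → X) {a : ℕ → ℕ}
    (ha : StrictMono a) (ha₀ : 1 ≤ a 0) : seqEntropy f a ≤ supSeqEntropy f :=
  le_iSup₂_of_le a ha (le_iSup_of_le ha₀ le_rfl)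

/-- The base-8 fraction `0.d₀d₁d₂…` with digits `dᵢ = 4` if `sᵢ` and `dᵢ = 0` otherwise. -/
noncomputable def octalValue : List Bool → ℝ
  | [] => 0
  | b :: s => (cond b 4 0 + octalValue s) / 8

theorem octalValue_nonneg : ∀ s, 0 ≤ octalValue s
  | [] => le_rfl
  | b :: s => by
    have := octalValue_nonneg s
    cases b <;> simp only [octalValue, cond] <;> positivity

theorem octalValue_le : ∀ s, octalValue s ≤ 4 / 7
  | [] => by norm_num [octalValue]
  | b :: s => by
    have := octalValue_le s
    cases b <;> simp only [octalValue, cond] <;> linarith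

theorem exists_int_pow_mul_octalValue (s : List Bool) (k : ℕ) :
    ∃ m : ℤ, 8 ^ k * octalValue s = m + octalValue (s.drop k) := by
  induction k generalizing s with
  | zero => exact ⟨0, by simp⟩
  | succ k ih =>
    cases s with
    | nil => exact ⟨0, by simp [octalValue]⟩
    | cons b s =>
      obtain ⟨m, hm⟩ := ih s
      refine ⟨8 ^ k * cond b 4 0 + m, ?_⟩
      rw [List.drop_succ_cons, eq_sub_of_add_eq' hm.symm, octalValue]
      cases b <;> simp only [cond] <;> push_cast <;> ring

theorem half_le_cos_two_pi_mul_octalValue_false (s : List Bool) :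
    1 / 2 ≤ cos (2 * π * octalValue (false :: s)) := by
  have h₀ := octalValue_nonneg s
  have h₁ := octalValue_le s
  have h : octalValue (false :: s) = octalValue s / 8 := by simp [octalValue]
  rw [h, ← cos_pi_div_three]
  apply cos_le_cos_of_nonneg_of_le_pi <;> nlinarith [pi_pos]

theorem cos_two_pi_mul_octalValue_true_le (s : List Bool) :
    cos (2 * π * octalValue (true :: s)) ≤ -(1 / 2) := by
  have h : 2 * π * octalValue (true :: s) = 2 * π * octalValue (false :: s) + π := by
    simp only [octalValue, cond]; ring
  rw [h, cos_add_pi]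
  linarith [half_le_cos_two_pi_mul_octalValue_false s]

noncomputable def octalRadius (s : List Bool) : ℝ :=
  1 + octalValue s / 8 ^ s.length

theorem one_le_octalRadius (s : List Bool) : 1 ≤ octalRadius s :=
  le_add_of_nonneg_right (div_nonneg (octalValue_nonneg s) (by positivity))

theorem exists_int_pow_mul_octalRadius (s : List Bool) (k : ℕ) :
    ∃ m : ℤ, 8 ^ (s.length + k) * octalRadius s = m + octalValue (s.drop k) := by
  obtain ⟨m, hm⟩ := exists_int_pow_mul_octalValue s k
  have h : (8 : ℝ) ^ (s.length + k) * (octalValue s / 8 ^ s.length) = 8 ^ k * octalValue s := by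
    rw [pow_add]; field_simp
  refine ⟨8 ^ (s.length + k) + m, ?_⟩
  rw [octalRadius, mul_add, mul_one, h, hm]
  push_cast
  ring

theorem tendsto_octalRadius_cofinite : Tendsto octalRadius cofinite (𝓝 1) := by
  unfold octalRadius
  have hlen : Tendsto List.length (cofinite : Filter (List Bool)) atTop :=
    Nat.cofinite_eq_atTop ▸ Tendsto.cofinite_of_finite_preimage_singleton
      fun n => (List.finite_length_eq Bool n).to_subtype
  have hpow : Tendsto (fun s : List Bool => (4 / 7 : ℝ) * (1 / 8) ^ s.length) cofinite (𝓝 0) := by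
    simpa using ((tendsto_pow_atTop_nhds_zero_of_lt_one (r := (1 / 8 : ℝ)) (by norm_num)
      (by norm_num)).comp hlen).const_mul (4 / 7 : ℝ)
  have hsmall : Tendsto (fun s => octalValue s / 8 ^ s.length) cofinite (𝓝 0) := by
    refine squeeze_zero (fun s => div_nonneg (octalValue_nonneg s) (by positivity))
      (fun s => ?_) hpow
    rw [one_div_pow, ← div_eq_mul_one_div]
    gcongr
    exact octalValue_le s
  simpa using hsmall.const_add (1 : ℝ)

theorem isCompact_range_octalRadius : IsCompact (range octalRadius) := by
  have h1 : (1 : ℝ) ∈ range octalRadius := ⟨[], by simp [octalRadius, octalValue]⟩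
  simpa [insert_eq_of_mem h1] using tendsto_octalRadius_cofinite.isCompact_insert_range_of_cofinite

theorem cos_two_pi_mul_pow_mul_octalRadius_ofFn {n : ℕ} (s : Fin n → Bool) (i : Fin n) :
    cos (2 * π * (8 ^ (n + i) * octalRadius (List.ofFn s))) =
      cos (2 * π * octalValue (s i :: (List.ofFn s).drop (i + 1))) := by
  obtain ⟨m, hm⟩ := exists_int_pow_mul_octalRadius (List.ofFn s) i
  rw [List.length_ofFn] at hm
  rw [hm, List.drop_eq_getElem_cons (by simp), List.getElem_ofFn, mul_add, add_comm,
    mul_comm (2 * π) (m : ℝ), cos_add_int_mul_two_pi]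

namespace Complex

noncomputable def equivRealProdHomeomorph : ℂ ≃ₜ ℝ × ℝ :=
  equivRealProdCLM.toHomeomorph

theorem equivRealProdHomeomorph_symm_apply (p : ℝ × ℝ) :
    equivRealProdHomeomorph.symm p = p.1 + p.2 * I :=
  equivRealProdCLM_symm_apply p

theorem re_equivRealProdHomeomorph_symm (p : ℝ × ℝ) :
    (equivRealProdHomeomorph.symm p).re = p.1 := by
  simp [equivRealProdHomeomorph_symm_apply]

noncomputable def radialRotation (θ : C(ℝ, ℝ)) : ℂ ≃ₜ ℂ where
  toFun z := exp (θ ‖z‖ * I) * z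
  invFun z := exp (-θ ‖z‖ * I) * z
  left_inv z := by
    simp only [norm_mul, norm_exp_ofReal_mul_I, one_mul, ← mul_assoc, ← exp_add]
    simp
  right_inv z := by
    simp only [norm_mul, ← ofReal_neg, norm_exp_ofReal_mul_I, one_mul, ← mul_assoc,
      ← exp_add]
    simp
  continuous_toFun := by fun_prop
  continuous_invFun := by fun_prop

variable (θ : C(ℝ, ℝ))

theorem radialRotation_apply (z : ℂ) : radialRotation θ z = exp (θ ‖z‖ * I) * z :=
  rfl

@[simp]
theorem norm_radialRotation (z : ℂ) : ‖radialRotation θ z‖ = ‖z‖ := by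
  simp [radialRotation_apply, norm_exp_ofReal_mul_I]

theorem iterate_radialRotation (k : ℕ) (z : ℂ) :
    (radialRotation θ)^[k] z = exp (k * θ ‖z‖ * I) * z := by
  induction k with
  | zero => simp
  | succ k ih =>
    have hnorm : ‖(radialRotation θ)^[k] z‖ = ‖z‖ := by
      simpa using Semiconj.iterate_right (gb := id) (norm_radialRotation θ) k z
    rw [iterate_succ_apply', radialRotation_apply, hnorm, ih, ← mul_assoc, ← exp_add]
    push_cast
    ring_nf

theorem isPeriodicPt_radialRotation {k : ℕ} {z : ℂ} {m : ℤ} (h : k * θ ‖z‖ = 2 * π * m) :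
    IsPeriodicPt (radialRotation θ) k z := by
  rw [IsPeriodicPt, IsFixedPt, iterate_radialRotation]
  have : (k * θ ‖z‖ * I : ℂ) = m * (2 * π * I) := by
    rw [← ofReal_natCast, ← ofReal_mul, h]; push_cast; ring
  rw [this, exp_int_mul_two_pi_mul_I, one_mul]

theorem re_iterate_radialRotation_ofReal (k : ℕ) {r : ℝ} (hr : 0 ≤ r) :
    ((radialRotation θ)^[k] r).re = r * Real.cos (k * θ r) := by
  rw [iterate_radialRotation, norm_real, Real.norm_of_nonneg hr, ← ofReal_natCast, ← ofReal_mul,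
    mul_comm, re_ofReal_mul, exp_ofReal_mul_I_re]

end Complex

open Complex

def circlesOfRadii (R : Set ℝ) : Set (ℝ × ℝ) :=
  {p | ‖equivRealProdHomeomorph.symm p‖ ∈ R}

theorem isCompact_circlesOfRadii {R : Set ℝ} (hR : IsCompact R) :
    IsCompact (circlesOfRadii R) := by
  obtain ⟨C, hC⟩ := hR.bddAbove
  have hK : IsCompact (norm ⁻¹' R : Set ℂ) :=
    (isCompact_closedBall 0 C).of_isClosed_subset (hR.isClosed.preimage continuous_norm)
      fun z hz => mem_closedBall_zero_iff.2 (hC hz)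
  have h : circlesOfRadii R = equivRealProdHomeomorph.symm ⁻¹' (norm ⁻¹' R) := rfl
  rw [h, Homeomorph.preimage_symm]
  exact hK.image equivRealProdHomeomorph.continuous

section rotationOnCircles

variable (θ : C(ℝ, ℝ)) (R : Set ℝ)

noncomputable def rotationOnCircles : circlesOfRadii R ≃ₜ circlesOfRadii R :=
  (equivRealProdHomeomorph.symm.trans ((radialRotation θ).trans equivRealProdHomeomorph)).subtype
    fun p => by simp [circlesOfRadii]

theorem semiconj_rotationOnCircles :
    Semiconj (fun y : circlesOfRadii R => equivRealProdHomeomorph.symm y) (rotationOnCircles θ R)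
      (radialRotation θ) :=
  fun _ => equivRealProdHomeomorph.symm_apply_apply _

theorem mem_periodicPts_rotationOnCircles
    (hR : ∀ r ∈ R, ∃ k : ℕ, 0 < k ∧ ∃ m : ℤ, k * θ r = 2 * π * m) (y : circlesOfRadii R) :
    y ∈ periodicPts (rotationOnCircles θ R) := by
  obtain ⟨k, hk, m, h⟩ := hR _ y.2
  refine mk_mem_periodicPts hk ?_
  apply equivRealProdHomeomorph.symm.injective.comp Subtype.val_injective
  exact ((semiconj_rotationOnCircles θ R).iterate_right k y).trans
    (isPeriodicPt_radialRotation θ h)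

theorem fst_iterate_rotationOnCircles {r : ℝ} (hr : 0 ≤ r) (hmem : (r, 0) ∈ circlesOfRadii R)
    (k : ℕ) : ((rotationOnCircles θ R)^[k] ⟨_, hmem⟩ : ℝ × ℝ).1 = r * Real.cos (k * θ r) := by
  have hr' : equivRealProdHomeomorph.symm (r, 0) = r := by
    simp [equivRealProdHomeomorph_symm_apply]
  have h : equivRealProdHomeomorph.symm ((rotationOnCircles θ R)^[k] ⟨_, hmem⟩ : ℝ × ℝ) =
      (radialRotation θ)^[k] r :=
    hr' ▸ (semiconj_rotationOnCircles θ R).iterate_right k ⟨_, hmem⟩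
  rw [← re_equivRealProdHomeomorph_symm, h, re_iterate_radialRotation_ofReal θ k hr]

end rotationOnCircles

noncomputable def octalRotation :
    circlesOfRadii (range octalRadius) ≃ₜ circlesOfRadii (range octalRadius) :=
  rotationOnCircles ⟨fun r => 2 * π * r, by fun_prop⟩ (range octalRadius)

theorem mem_periodicPts_octalRotation (y : circlesOfRadii (range octalRadius)) :
    y ∈ periodicPts octalRotation := by
  refine mem_periodicPts_rotationOnCircles _ _ ?_ y
  rintro _ ⟨s, rfl⟩
  obtain ⟨m, hm⟩ := exists_int_pow_mul_octalRadius s s.length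
  refine ⟨8 ^ (s.length + s.length), by positivity, m, ?_⟩
  simp only [ContinuousMap.coe_mk, List.drop_length, octalValue, add_zero] at hm ⊢
  push_cast
  rw [← hm]
  ring

theorem ofReal_log_two_div_two_le_seqEntropy_octalRotation :
    ENNReal.ofReal (Real.log 2 / 2) ≤ seqEntropy octalRotation (8 ^ ·) := by
  have hfst : Continuous fun y : circlesOfRadii (range octalRadius) => (y : ℝ × ℝ).1 := by
    fun_prop
  refine ofReal_log_two_div_two_le_seqEntropy
    (K₀ := {y | 1 / 2 ≤ (y : ℝ × ℝ).1}) (K₁ := {y | (y : ℝ × ℝ).1 ≤ -(1 / 2)})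
    (isClosed_le continuous_const hfst) (isClosed_le hfst continuous_const)
    (disjoint_left.2 fun y (h₀ : 1 / 2 ≤ (y : ℝ × ℝ).1) (h₁ : (y : ℝ × ℝ).1 ≤ -(1 / 2)) =>
      by linarith)
    fun n s => ?_
  set r := octalRadius (List.ofFn s)
  have hr : 0 ≤ r := zero_le_one.trans (one_le_octalRadius _)
  have hmem : (r, (0 : ℝ)) ∈ circlesOfRadii (range octalRadius) :=
    ⟨List.ofFn s, by simp [equivRealProdHomeomorph_symm_apply, r, abs_of_nonneg hr]⟩
  refine ⟨⟨_, hmem⟩, fun i => ?_⟩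
  have hx : ((octalRotation^[8 ^ (n + i)] ⟨_, hmem⟩ : circlesOfRadii _) : ℝ × ℝ).1 =
      r * Real.cos (2 * π * octalValue (s i :: (List.ofFn s).drop (i + 1))) := by
    rw [← cos_two_pi_mul_pow_mul_octalRadius_ofFn, octalRotation,
      fst_iterate_rotationOnCircles _ _ hr]
    simp only [ContinuousMap.coe_mk, r]
    push_cast
    ring_nf
  have h₀ := half_le_cos_two_pi_mul_octalValue_false ((List.ofFn s).drop (i + 1))
  have h₁ := cos_two_pi_mul_octalValue_true_le ((List.ofFn s).drop (i + 1))
  have h₁r := one_le_octalRadius (List.ofFn s)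
  cases hs : s i <;> rw [hs] at hx
  · show (1 / 2 : ℝ) ≤ _
    nlinarith
  · show _ ≤ -(1 / 2 : ℝ)
    nlinarith

/-- There is a compact subset `Y ⊆ ℝ²` and a homeomorphism `g : Y → Y`
which is pointwise periodic (hence `(Y, g)` is distal) and has `h_∞(g) > 0`. -/
theorem exists_pointwise_periodic_homeo_positive_seqEntropy :
    ∃ Y : Set (ℝ × ℝ), IsCompact Y ∧ ∃ g : Y ≃ₜ Y,
      (∀ x : Y, ∃ n : ℕ, 1 ≤ n ∧ (⇑g)^[n] x = x) ∧
      (∀ x y : Y,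
        Filter.liminf (fun n : ℕ => dist ((⇑g)^[n] x) ((⇑g)^[n] y)) Filter.atTop = 0 → x = y) ∧
      0 < supSeqEntropy (⇑g) := by
  refine ⟨_, isCompact_circlesOfRadii isCompact_range_octalRadius, octalRotation,
    fun x => mem_periodicPts_octalRotation x, fun x y => eq_of_liminf_dist_iterate_eq_zero
      octalRotation.injective (mem_periodicPts_octalRotation x) (mem_periodicPts_octalRotation y),
    ?_⟩
  calc (0 : ℝ≥0∞) < ENNReal.ofReal (Real.log 2 / 2) := by
        simpa using Real.log_pos one_lt_two
    _ ≤ seqEntropy octalRotation (8 ^ ·) := ofReal_log_two_div_two_le_seqEntropy_octalRotation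
    _ ≤ supSeqEntropy octalRotation :=
        seqEntropy_le_supSeqEntropy _ (pow_right_strictMono₀ (by norm_num)) le_rfl
end
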